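/- Let f_n: X → X be continuous maps on a metric space X, Q = {q_n} an increasing sequence in ℕ, and W a nonempty open subset of X × X. Then the set F(W,Q) = {(x,y) ∈ X × X : the set {n ∈ Q : (f_0^n(x), f_0^n(y)) ∈ W} has upper density 1 with respect to Q} is a G_δ subset of X × X. -/

import Mathlib

open Filter Metric Set
open scoped Classical

/-- Trajectory of the non-autonomous system: `orb f n = f_{n-1} ∘ ⋯ ∘ f_0`, `orb f 0 = id`. -/
def orb {X : Type*} (f : ℕ → X → X) : ℕ → X → X
  | 0 => id
  | n + 1 => fun x => f n (orb f n x)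

/-- Cesàro average of the indicator of `dist (f_0^{p i} x) (f_0^{p i} y) < ε` over `i < n`. -/
noncomputable def distAvg {X : Type*} [MetricSpace X] (f : ℕ → X → X) (p : ℕ → ℕ)
    (x y : X) (ε : ℝ) (n : ℕ) : ℝ :=
  (∑ i ∈ Finset.range n, if dist (orb f (p i) x) (orb f (p i) y) < ε then (1 : ℝ) else 0) / n

theorem orb_continuous {X : Type*} [MetricSpace X] (f : ℕ → X → X)
    (hf : ∀ n, Continuous (f n)) (n : ℕ) : Continuous (orb f n) := by
  induction n with
  | zero => exact continuous_id
  | succ n ih => exact (hf n).comp ih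

theorem stmt5 {X : Type*} [MetricSpace X] (f : ℕ → X → X) (hf : ∀ n, Continuous (f n))
    (q : ℕ → ℕ) (hq : StrictMono q) (W : Set (X × X)) (hW : IsOpen W) (hWne : W.Nonempty) :
    IsGδ {p : X × X | limsup (fun n => (∑ i ∈ Finset.range n,
      if (orb f (q i) p.1, orb f (q i) p.2) ∈ W then (1 : ℝ) else 0) / n) atTop = 1} := by
  set g : ℕ → X × X → ℝ := fun n p => (∑ i ∈ Finset.range n,
      if (orb f (q i) p.1, orb f (q i) p.2) ∈ W then (1 : ℝ) else 0) / n with hg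
  -- bounds
  have hg0 : ∀ n p, 0 ≤ g n p := by
    intro n p
    apply div_nonneg _ (Nat.cast_nonneg n)
    exact Finset.sum_nonneg fun i _ => by positivity
  have hg1 : ∀ n p, g n p ≤ 1 := by
    intro n p
    rcases Nat.eq_zero_or_pos n with h | h
    · simp [hg, h]
    · rw [div_le_one (by exact_mod_cast h)]
      calc (∑ i ∈ Finset.range n, if (orb f (q i) p.1, orb f (q i) p.2) ∈ W then (1 : ℝ) else 0)
          ≤ ∑ _i ∈ Finset.range n, (1 : ℝ) :=
            Finset.sum_le_sum fun i _ => by split <;> norm_num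
        _ = n := by simp
  have hbdd : ∀ p, IsBoundedUnder (· ≤ ·) atTop (fun n => g n p) :=
    fun p => isBoundedUnder_of ⟨1, fun m => hg1 m p⟩
  have hcob : ∀ p, IsCoboundedUnder (· ≤ ·) atTop (fun n => g n p) :=
    fun p => (isBoundedUnder_of ⟨0, fun m => hg0 m p⟩ : IsBoundedUnder (· ≥ ·) atTop (fun n => g n p)).isCoboundedUnder_le
  have hle : ∀ p, limsup (fun n => g n p) atTop ≤ 1 :=
    fun p => limsup_le_of_le (hcob p) (Eventually.of_forall fun n => hg1 n p)
  -- openness of superlevel sets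
  have hopen : ∀ (n : ℕ) (c : ℝ), 0 ≤ c → IsOpen {p : X × X | c < g n p} := by
    intro n c hc
    have hlsc : LowerSemicontinuous fun p : X × X => ∑ i ∈ Finset.range n,
        if (orb f (q i) p.1, orb f (q i) p.2) ∈ W then (1 : ℝ) else 0 := by
      apply lowerSemicontinuous_sum
      intro i _
      have hU : IsOpen {p : X × X | (orb f (q i) p.1, orb f (q i) p.2) ∈ W} := by
        have : Continuous fun p : X × X => (orb f (q i) p.1, orb f (q i) p.2) :=
          ((orb_continuous f hf (q i)).comp continuous_fst).prodMk
            ((orb_continuous f hf (q i)).comp continuous_snd)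
        exact hW.preimage this
      have heq : (fun p : X × X => if (orb f (q i) p.1, orb f (q i) p.2) ∈ W then (1 : ℝ) else 0)
          = Set.indicator {p : X × X | (orb f (q i) p.1, orb f (q i) p.2) ∈ W} (fun _ => (1 : ℝ)) := by
        ext p; simp [Set.indicator_apply]
      rw [heq]
      exact hU.lowerSemicontinuous_indicator (zero_le_one (α := ℝ))
    rcases Nat.eq_zero_or_pos n with h | h
    · convert isOpen_empty
      ext p
      simp only [mem_setOf_eq, mem_empty_iff_false, iff_false, not_lt, hg, h]
      simpa using hc
    · have : {p : X × X | c < g n p} = {p : X × X | c * n < ∑ i ∈ Finset.range n,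
          if (orb f (q i) p.1, orb f (q i) p.2) ∈ W then (1 : ℝ) else 0} := by
        ext p
        simp only [mem_setOf_eq, hg]
        rw [lt_div_iff₀ (by exact_mod_cast h)]
      rw [this]
      exact hlsc.isOpen_preimage _
  -- rewrite the set
  have hset : {p : X × X | limsup (fun n => g n p) atTop = 1} =
      ⋂ (k : ℕ), ⋂ (N : ℕ), ⋃ (n : ℕ), ⋃ (_ : N ≤ n),
        {p : X × X | 1 - 1 / (k + 1) < g n p} := by
    ext p
    simp only [mem_setOf_eq, mem_iInter, mem_iUnion]
    constructor
    · intro h k N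
      have hlt : 1 - 1 / ((k : ℝ) + 1) < limsup (fun n => g n p) atTop := by
        rw [h]; simp [sub_lt_self_iff]; positivity
      have := frequently_lt_of_lt_limsup (hcob p) hlt
      rw [frequently_atTop] at this
      obtain ⟨n, hn, hgn⟩ := this N
      exact ⟨n, hn, hgn⟩
    · intro h
      refine le_antisymm (hle p) ?_
      have key : ∀ k : ℕ, 1 - 1 / ((k : ℝ) + 1) ≤ limsup (fun n => g n p) atTop := by
        intro k
        apply le_limsup_of_frequently_le _ (hbdd p)
        rw [frequently_atTop]
        intro N
        obtain ⟨n, hn, hgn⟩ := h k N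
        exact ⟨n, hn, hgn.le⟩
      have htend : Tendsto (fun k : ℕ => 1 - 1 / ((k : ℝ) + 1)) atTop (nhds 1) := by
        have := tendsto_one_div_add_atTop_nhds_zero_nat (𝕜 := ℝ)
        have := (tendsto_const_nhds (x := (1 : ℝ)) (f := atTop)).sub this
        simpa using this
      exact le_of_tendsto htend (Eventually.of_forall key)
  rw [show {p : X × X | limsup (fun n => (∑ i ∈ Finset.range n,
      if (orb f (q i) p.1, orb f (q i) p.2) ∈ W then (1 : ℝ) else 0) / n) atTop = 1}
      = {p : X × X | limsup (fun n => g n p) atTop = 1} from rfl, hset]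
  refine IsGδ.iInter fun k => IsGδ.iInter fun N => IsOpen.isGδ ?_
  refine isOpen_iUnion fun n => isOpen_iUnion fun _ => hopen n _ ?_
  have : 1 / ((k : ℝ) + 1) ≤ 1 := by
    rw [div_le_one (by positivity)]; simp
  linarith
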